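/- arXiv:math/0504296 — 2 statements merged into one kernel-verified Lean document; each statement's English description precedes it below -/
import Mathlib

section
/- Let H be a pre-Lie algebra with a nonassociative permutative connected coproduct satisfying the distributive law Δ(a∘b) = a⊗b + Δ(a)∘b. Then H decomposes as a direct sum H = Prim(H) ⊕ H², where Prim(H) = ker Δ and H² is the image of the pre-Lie product (the span of all products a∘b). -/
/-!
Write `Φ = μ ∘ Δ`. The distributive law with the NAP condition gives `Δ ∘ Φ = Ψ ∘ Δ`, and with
the pre-Lie identity `Φ ∘ μ = μ ∘ Ψ'`, where `Ψ` and `Ψ'` agree with `(1 + Φ) ⊗ 1` up to terms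
lowering the filtration level of the left tensor factor. By induction along the filtration, `Φ`
is annihilated on `Cₙ` by some `X * Q`, and `Ψ`, `Ψ'` on `Cₙ ⊗ H` by some `R`, with `Q`, `R` free
of roots in `{0, -1, -2, …}`: annihilators of `(1 + Φ) ⊗ 1` are those of `Φ` shifted by one, and
for `x ∈ Cₙ₊₁` one has `Δ (R(Φ) x) = R(Ψ) (Δ x) = 0`. As `R(0) ≠ 0`, `Ψ` is injective and `Ψ'`
surjective on `Cₙ ⊗ H`. Hence `ker Φ = ker Δ`, `H = ker Φ + im Φ ⊆ Prim(H) + H²`, and a primitive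
`μ T = μ (Ψ' T') = Φ (μ T')` lies in `ker Φ ∩ im Φ`, which is `0` as `0` is a simple root of
`X * Q`.
-/

open TensorProduct

variable (K : Type) [Field K] [CharZero K]
variable (H : Type) [AddCommGroup H] [Module K H]

/-- The permutation `τ₂₃` of the second and third factors of `(H⊗H)⊗H`. -/
noncomputable def tau23 :
    TensorProduct K (TensorProduct K H H) H →ₗ[K]
      TensorProduct K (TensorProduct K H H) H :=
  (TensorProduct.assoc K H H H).symm.toLinearMap ∘ₗ
    LinearMap.lTensor H (TensorProduct.comm K H H).toLinearMap ∘ₗ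
      (TensorProduct.assoc K H H H).toLinearMap

/-- The subspace `p ⊗ q` of `M ⊗ M` spanned by tensors of elements of the
submodules `p` and `q`. -/
noncomputable def tensSub (M : Type) [AddCommGroup M] [Module K M]
    (p q : Submodule K M) : Submodule K (TensorProduct K M M) :=
  LinearMap.range (TensorProduct.map p.subtype q.subtype)

/-- The coradical-type filtration: `C₁ = ker Δ`,
`Cₙ = {x | Δ(x) ∈ Σ_{i=1}^{n−1} C_i ⊗ C_{n−i}}` (and `C₀ = 0`). -/
noncomputable def Cfil (M : Type) [AddCommGroup M] [Module K M]
    (D : M →ₗ[K] TensorProduct K M M) : ℕ → Submodule K M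
  | 0 => ⊥
  | n + 1 =>
    Submodule.comap D
      (∑ j ∈ (Finset.range n).attach,
        tensSub K M (Cfil M D (j.1 + 1)) (Cfil M D (n - j.1)))
  termination_by n => n
  decreasing_by
  · have := Finset.mem_range.mp j.2; omega
  · have := Finset.mem_range.mp j.2; omega

open Polynomial

section TensorSubmodule

variable {K : Type} [Field K] {M : Type} [AddCommGroup M] [Module K M]

lemma tensSub_le_iff {p q : Submodule K M} {r : Submodule K (M ⊗[K] M)} :
    tensSub K M p q ≤ r ↔ ∀ a ∈ p, ∀ b ∈ q, a ⊗ₜ[K] b ∈ r := by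
  rw [tensSub, ← TensorProduct.mapIncl, TensorProduct.range_mapIncl, Submodule.map₂_le]
  rfl

lemma tmul_mem_tensSub {p q : Submodule K M} {a b : M} (ha : a ∈ p) (hb : b ∈ q) :
    a ⊗ₜ[K] b ∈ tensSub K M p q :=
  tensSub_le_iff.mp le_rfl a ha b hb

lemma tensSub_bot_left (q : Submodule K M) : tensSub K M ⊥ q = ⊥ :=
  eq_bot_iff.mpr <| tensSub_le_iff.mpr fun a ha _ _ => by simp [(Submodule.mem_bot K).mp ha]

lemma tensSub_top_le_comap_rTensor {p p' : Submodule K M} {f : M →ₗ[K] M}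
    (hf : ∀ a ∈ p, f a ∈ p') :
    tensSub K M p ⊤ ≤ (tensSub K M p' ⊤).comap (f.rTensor M) :=
  tensSub_le_iff.mpr fun a ha _ _ => tmul_mem_tensSub (hf a ha) Submodule.mem_top

lemma tensSub_top_le_comap_lTensor (p : Submodule K M) (f : M →ₗ[K] M) :
    tensSub K M p ⊤ ≤ (tensSub K M p ⊤).comap (f.lTensor M) :=
  tensSub_le_iff.mpr fun _ ha _ _ => tmul_mem_tensSub ha Submodule.mem_top

end TensorSubmodule

section Aeval

variable {𝕜 V W : Type*} [Field 𝕜] [AddCommGroup V] [Module 𝕜 V] [AddCommGroup W] [Module 𝕜 W]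

lemma aeval_apply_eq_apply_add_coeff_zero_smul (A : Module.End 𝕜 V) (P : 𝕜[X]) (v : V) :
    aeval A P v = A (aeval A P.divX v) + P.coeff 0 • v := by
  conv_lhs => rw [← X_mul_divX_add P]
  rw [map_add, map_mul, aeval_X, aeval_C, LinearMap.add_apply, Module.End.mul_apply,
    Module.algebraMap_end_apply]

lemma aeval_apply_of_apply_eq_zero {A : Module.End 𝕜 V} {v : V} (hv : A v = 0) (P : 𝕜[X]) :
    aeval A P v = P.coeff 0 • v := by
  conv_lhs => rw [← divX_mul_X_add P]
  simp [hv]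

lemma mem_range_of_aeval_apply_eq_zero {A : Module.End 𝕜 V} {P : 𝕜[X]} {v : V}
    (hP : P.coeff 0 ≠ 0) (hv : aeval A P v = 0) : v ∈ LinearMap.range A := by
  rw [aeval_apply_eq_apply_add_coeff_zero_smul, add_eq_zero_iff_eq_neg] at hv
  refine ⟨-(P.coeff 0)⁻¹ • aeval A P.divX v, ?_⟩
  rw [map_smul, hv, neg_smul_neg, smul_smul, inv_mul_cancel₀ hP, one_smul]

lemma comp_aeval_of_comp_eq {f : V →ₗ[𝕜] W} {A : Module.End 𝕜 V} {B : Module.End 𝕜 W}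
    (h : f ∘ₗ A = B ∘ₗ f) (P : 𝕜[X]) : f ∘ₗ aeval A P = aeval B P ∘ₗ f := by
  induction P using Polynomial.induction_on' with
  | add p q hp hq => rw [map_add, map_add, LinearMap.comp_add, LinearMap.add_comp, hp, hq]
  | monomial n a =>
    ext v
    simp only [LinearMap.comp_apply, aeval_monomial, Module.End.mul_apply,
      Module.algebraMap_end_apply, map_smul]
    rw [← LinearMap.comp_apply f, ← Module.End.commute_pow_left_of_commute h.symm n,
      LinearMap.comp_apply]

lemma aeval_apply_sub_aeval_apply_mem {A B : Module.End 𝕜 V} {U U' : Submodule 𝕜 V}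
    (hA : ∀ v ∈ U', A v ∈ U') (hB : ∀ v ∈ U, B v ∈ U) (hAB : ∀ v ∈ U, A v - B v ∈ U')
    (P : 𝕜[X]) {v : V} (hv : v ∈ U) : aeval A P v - aeval B P v ∈ U' := by
  have hpow : ∀ n, ∀ v ∈ U, (A ^ n) v - (B ^ n) v ∈ U' := by
    intro n
    induction n with
    | zero => simp
    | succ n ih =>
      intro v hv
      have hsplit : (A ^ (n + 1)) v - (B ^ (n + 1)) v
          = A ((A ^ n) v - (B ^ n) v) + (A ((B ^ n) v) - B ((B ^ n) v)) := by
        simp only [pow_succ', Module.End.mul_apply, map_sub]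
        abel
      rw [hsplit]
      exact U'.add_mem (hA _ (ih v hv))
        (hAB _ (Module.End.pow_apply_mem_of_forall_mem n hB v hv))
  induction P using Polynomial.induction_on' with
  | add p q hp hq =>
    simpa only [map_add, LinearMap.add_apply, add_sub_add_comm] using U'.add_mem hp hq
  | monomial n a =>
    simpa only [aeval_monomial, Module.End.mul_apply, Module.algebraMap_end_apply, ← smul_sub]
      using U'.smul_mem a (hpow n v hv)

lemma exists_aeval_eq_zero_of_triangular (S : Submonoid 𝕜[X]) {B D : Module.End 𝕜 V}
    {F : ℕ → Submodule 𝕜 V} (hF : Monotone F) (hF0 : F 0 = ⊥)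
    (hB : ∀ i, ∀ v ∈ F i, B v ∈ F i) (hD : ∀ i, ∀ v ∈ F (i + 1), D v ∈ F i) {n : ℕ}
    (hP : ∀ i < n, ∃ P ∈ S, ∀ v ∈ F (i + 1), aeval B P v = 0) :
    ∃ P ∈ S, ∀ v ∈ F n, aeval (B + D) P v = 0 := by
  induction n with
  | zero =>
    refine ⟨1, S.one_mem, fun v hv => ?_⟩
    rw [hF0, Submodule.mem_bot] at hv
    simp [hv]
  | succ n ih =>
    obtain ⟨R, hRS, hR⟩ := ih fun i hi => hP i (by omega)
    obtain ⟨P, hPS, hP⟩ := hP n (by omega)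
    have hBD : ∀ v ∈ F n, (B + D) v ∈ F n := by
      intro v hv
      refine (F n).add_mem (hB n v hv) ?_
      rcases n with _ | n
      · rw [hF0, Submodule.mem_bot] at hv
        simp [hv]
      · exact hF n.le_succ (hD n v hv)
    refine ⟨R * P, S.mul_mem hRS hPS, fun v hv => ?_⟩
    have hlow : aeval (B + D) P v ∈ F n := by
      simpa [hP v hv] using aeval_apply_sub_aeval_apply_mem hBD (hB (n + 1))
        (fun w hw => by simpa using hD n w hw) P hv
    rw [map_mul, Module.End.mul_apply, hR _ hlow]

end Aeval

section NonposIntRootFree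

variable (𝕜 : Type*) [Field 𝕜]

def nonposIntRootFree : Submonoid 𝕜[X] where
  carrier := {P | ∀ k : ℕ, P.eval (-(k : 𝕜)) ≠ 0}
  mul_mem' {P Q} hP hQ k := by simpa only [eval_mul] using mul_ne_zero (hP k) (hQ k)
  one_mem' k := by simp

variable {𝕜}

lemma coeff_zero_ne_zero_of_mem_nonposIntRootFree {P : 𝕜[X]} (hP : P ∈ nonposIntRootFree 𝕜) :
    P.coeff 0 ≠ 0 := by
  simpa [coeff_zero_eq_eval_zero] using hP 0

lemma X_mul_comp_X_sub_one_mem_nonposIntRootFree [CharZero 𝕜] {Q : 𝕜[X]}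
    (hQ : Q ∈ nonposIntRootFree 𝕜) : (X * Q).comp (X - 1) ∈ nonposIntRootFree 𝕜 := by
  intro k
  have hk : -(k : 𝕜) - 1 ≠ 0 := by
    have := Nat.cast_add_one_ne_zero (R := 𝕜) k
    contrapose! this
    linear_combination -this
  have hQk := hQ (k + 1)
  rw [show -((k + 1 : ℕ) : 𝕜) = -(k : 𝕜) - 1 by push_cast; ring] at hQk
  simpa only [eval_comp, eval_mul, eval_X, eval_sub, eval_one] using mul_ne_zero hk hQk

end NonposIntRootFree

section Filtration

variable {K : Type} [Field K] {H : Type} [AddCommGroup H] [Module K H] (Δ : H →ₗ[K] H ⊗[K] H)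

lemma Cfil_zero : Cfil K H Δ 0 = ⊥ := by
  rw [Cfil]

lemma mem_Cfil_succ {n : ℕ} {x : H} :
    x ∈ Cfil K H Δ (n + 1) ↔
      Δ x ∈ ∑ j ∈ Finset.range n, tensSub K H (Cfil K H Δ (j + 1)) (Cfil K H Δ (n - j)) := by
  rw [Cfil, Submodule.mem_comap, Finset.sum_attach (Finset.range n)
    (fun j => tensSub K H (Cfil K H Δ (j + 1)) (Cfil K H Δ (n - j)))]

lemma sum_tensSub_Cfil_le {n : ℕ} {r : Submodule K (H ⊗[K] H)}
    (h : ∀ j < n, ∀ u ∈ Cfil K H Δ (j + 1), ∀ v ∈ Cfil K H Δ (n - j), u ⊗ₜ[K] v ∈ r) :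
    ∑ j ∈ Finset.range n, tensSub K H (Cfil K H Δ (j + 1)) (Cfil K H Δ (n - j)) ≤ r :=
  Finset.sum_induction _ (· ≤ r)
    (fun _ _ ha hb => (Submodule.add_eq_sup _ _).trans_le (sup_le ha hb)) bot_le
    fun j hj => tensSub_le_iff.mpr (h j (Finset.mem_range.mp hj))

lemma tmul_mem_sum_tensSub_Cfil {n a b : ℕ} (hab : a + b = n + 1) {u v : H}
    (hu : u ∈ Cfil K H Δ a) (hv : v ∈ Cfil K H Δ b) :
    u ⊗ₜ[K] v ∈ ∑ j ∈ Finset.range n, tensSub K H (Cfil K H Δ (j + 1)) (Cfil K H Δ (n - j)) := by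
  rcases a with _ | a
  · rw [Cfil_zero, Submodule.mem_bot] at hu
    simp [hu]
  rcases b with _ | b
  · rw [Cfil_zero, Submodule.mem_bot] at hv
    simp [hv]
  refine Finset.single_le_sum (f := fun j => tensSub K H (Cfil K H Δ (j + 1)) (Cfil K H Δ (n - j)))
    (fun _ _ => bot_le) (Finset.mem_range.mpr (show a < n by omega)) ?_
  rw [show n - a = b + 1 by omega]
  exact tmul_mem_tensSub hu hv

lemma Cfil_le_succ (n : ℕ) : Cfil K H Δ n ≤ Cfil K H Δ (n + 1) := by
  induction n using Nat.strong_induction_on with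
  | _ n ih =>
    rcases n with _ | m
    · simp [Cfil_zero]
    intro x hx
    rw [mem_Cfil_succ] at hx ⊢
    exact sum_tensSub_Cfil_le Δ (fun j hj u hu v hv => tmul_mem_sum_tensSub_Cfil Δ
      (a := j + 1) (b := m - j + 1) (by omega) hu (ih (m - j) (by omega) hv)) hx

lemma Cfil_mono : Monotone (Cfil K H Δ) :=
  monotone_nat_of_le_succ (Cfil_le_succ Δ)

lemma tensSub_Cfil_top_mono : Monotone fun n => tensSub K H (Cfil K H Δ n) ⊤ :=
  fun _ _ hmn => tensSub_le_iff.mpr fun _ ha _ _ =>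
    tmul_mem_tensSub (Cfil_mono Δ hmn ha) Submodule.mem_top

lemma Delta_mem_tensSub_of_mem_Cfil_succ {n : ℕ} {x : H} (hx : x ∈ Cfil K H Δ (n + 1)) :
    Δ x ∈ tensSub K H (Cfil K H Δ n) ⊤ :=
  sum_tensSub_Cfil_le Δ (fun _ hj _ hu _ _ =>
    tmul_mem_tensSub (Cfil_mono Δ (by omega) hu) Submodule.mem_top) ((mem_Cfil_succ Δ).mp hx)

lemma exists_mem_tensSub_Cfil (hconn : ∀ x : H, ∃ n, x ∈ Cfil K H Δ n) (T : H ⊗[K] H) :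
    ∃ n, T ∈ tensSub K H (Cfil K H Δ n) ⊤ := by
  induction T using TensorProduct.induction_on with
  | zero => exact ⟨0, zero_mem _⟩
  | tmul a b =>
    obtain ⟨n, hn⟩ := hconn a
    exact ⟨n, tmul_mem_tensSub hn Submodule.mem_top⟩
  | add T T' hT hT' =>
    obtain ⟨m, hm⟩ := hT
    obtain ⟨n, hn⟩ := hT'
    exact ⟨max m n, add_mem (tensSub_Cfil_top_mono Δ (le_max_left m n) hm)
      (tensSub_Cfil_top_mono Δ (le_max_right m n) hn)⟩

end Filtration

section DistributiveLaw

variable {K : Type} [Field K] {H : Type} [AddCommGroup H] [Module K H]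

def DistribLaw (μ : H →ₗ[K] H →ₗ[K] H) (Δ : H →ₗ[K] H ⊗[K] H) : Prop :=
  ∀ x y : H, Δ (μ x y) = x ⊗ₜ[K] y + LinearMap.rTensor H (μ.flip y) (Δ x)
    + LinearMap.lTensor H (μ.flip y) (Δ x)

def Phi (μ : H →ₗ[K] H →ₗ[K] H) (Δ : H →ₗ[K] H ⊗[K] H) : Module.End K H :=
  lift μ ∘ₗ Δ

/-- `a ⊗ b ↦ Σ a' ⊗ g (a'' ⊗ b)`, where `Δ a = Σ a' ⊗ a''`. -/
def leftSplit (Δ : H →ₗ[K] H ⊗[K] H) (g : H ⊗[K] H →ₗ[K] H) : Module.End K (H ⊗[K] H) :=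
  g.lTensor H ∘ₗ (TensorProduct.assoc K H H H).toLinearMap ∘ₗ Δ.rTensor H

def Psi (μ : H →ₗ[K] H →ₗ[K] H) (Δ : H →ₗ[K] H ⊗[K] H) (g : H ⊗[K] H →ₗ[K] H) :
    Module.End K (H ⊗[K] H) :=
  (1 + Phi μ Δ).rTensor H + leftSplit Δ g

variable {μ : H →ₗ[K] H →ₗ[K] H} {Δ : H →ₗ[K] H ⊗[K] H}

lemma Phi_apply (x : H) : Phi μ Δ x = lift μ (Δ x) :=
  rfl

lemma leftSplit_tmul (g : H ⊗[K] H →ₗ[K] H) (a b : H) :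
    leftSplit Δ g (a ⊗ₜ[K] b) = (g ∘ₗ (TensorProduct.mk K H H).flip b).lTensor H (Δ a) := by
  have key : ∀ T : H ⊗[K] H, g.lTensor H (TensorProduct.assoc K H H H (T ⊗ₜ[K] b))
      = (g ∘ₗ (TensorProduct.mk K H H).flip b).lTensor H T := by
    intro T
    induction T using TensorProduct.induction_on with
    | zero => simp
    | tmul x y => simp
    | add x y hx hy => simp only [add_tmul, map_add, hx, hy]
  exact key (Δ a)

lemma rTensor_tau23_tmul (g : H ⊗[K] H →ₗ[K] H) (T : H ⊗[K] H) (b : H) :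
    g.rTensor H (tau23 K H (T ⊗ₜ[K] b)) = (g ∘ₗ (TensorProduct.mk K H H).flip b).rTensor H T := by
  induction T using TensorProduct.induction_on with
  | zero => simp
  | tmul x y => simp [tau23]
  | add x y hx hy => simp only [add_tmul, map_add, hx, hy]

lemma Delta_comp_lift (hdlaw : DistribLaw μ Δ) :
    Δ ∘ₗ lift μ = LinearMap.id + (lift μ).rTensor H ∘ₗ tau23 K H ∘ₗ Δ.rTensor H
      + leftSplit Δ (lift μ) := by
  refine TensorProduct.ext' fun a b => ?_
  simp only [LinearMap.comp_apply, LinearMap.add_apply, LinearMap.id_apply, lift.tmul,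
    LinearMap.rTensor_tmul, rTensor_tau23_tmul, leftSplit_tmul]
  exact hdlaw a b

lemma Delta_comp_Phi (hdlaw : DistribLaw μ Δ)
    (hnap : tau23 K H ∘ₗ LinearMap.rTensor H Δ ∘ₗ Δ = LinearMap.rTensor H Δ ∘ₗ Δ) :
    Δ ∘ₗ Phi μ Δ = Psi μ Δ (lift μ) ∘ₗ Δ := by
  ext x
  have h := LinearMap.congr_fun (Delta_comp_lift hdlaw) (Δ x)
  have hn := LinearMap.congr_fun hnap x
  simp only [LinearMap.comp_apply, LinearMap.add_apply, LinearMap.id_apply] at h hn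
  simp only [LinearMap.comp_apply, Phi, Psi, LinearMap.add_apply, h, hn, LinearMap.rTensor_add]
  rw [Module.End.one_eq_id, LinearMap.rTensor_id, LinearMap.rTensor_comp, LinearMap.id_apply,
    LinearMap.comp_apply]

lemma Phi_comp_lift
    (hpre : ∀ a b c : H, μ (μ a b) c - μ a (μ b c) = μ (μ a c) b - μ a (μ c b))
    (hdlaw : DistribLaw μ Δ) :
    Phi μ Δ ∘ₗ lift μ = lift μ ∘ₗ Psi μ Δ (lift μ.flip) := by
  -- on `(x ⊗ y) ⊗ z`: `(x z) y + x (y z) = (x y) z + x (z y)`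
  have hpreLie : lift μ ∘ₗ (lift μ).rTensor H ∘ₗ tau23 K H
        + lift μ ∘ₗ (lift μ).lTensor H ∘ₗ (TensorProduct.assoc K H H H).toLinearMap
      = lift μ ∘ₗ (lift μ).rTensor H
        + lift μ ∘ₗ (lift μ.flip).lTensor H ∘ₗ (TensorProduct.assoc K H H H).toLinearMap := by
    refine TensorProduct.ext_threefold fun x y z => ?_
    simpa [tau23, sub_eq_sub_iff_add_eq_add] using hpre x z y
  refine LinearMap.ext fun T => ?_
  have h := LinearMap.congr_fun hpreLie (Δ.rTensor H T)
  have hd := LinearMap.congr_fun (Delta_comp_lift hdlaw) T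
  simp only [LinearMap.comp_apply, LinearMap.add_apply, LinearMap.id_apply] at h hd
  simp only [LinearMap.comp_apply, Phi, Psi, leftSplit, LinearMap.add_apply, hd, map_add]
  rw [add_assoc, h, LinearMap.rTensor_add, Module.End.one_eq_id, LinearMap.rTensor_id,
    LinearMap.rTensor_comp, LinearMap.add_apply, LinearMap.id_apply, LinearMap.comp_apply, map_add,
    add_assoc]

lemma mul_mem_Cfil (hdlaw : DistribLaw μ Δ) {i j : ℕ} {a b : H} (ha : a ∈ Cfil K H Δ i)
    (hb : b ∈ Cfil K H Δ j) : μ a b ∈ Cfil K H Δ (i + j) := by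
  induction i using Nat.strong_induction_on generalizing a with
  | _ i ih =>
    rcases i with _ | i
    · rw [Cfil_zero, Submodule.mem_bot] at ha
      simp [ha]
    rcases j with _ | j
    · rw [Cfil_zero, Submodule.mem_bot] at hb
      simp [hb]
    have hΔa := (mem_Cfil_succ Δ).mp ha
    rw [show i + 1 + (j + 1) = i + j + 1 + 1 by omega, mem_Cfil_succ, hdlaw]
    refine add_mem (add_mem (tmul_mem_sum_tensSub_Cfil Δ (by omega) ha hb) ?_) ?_
    · refine sum_tensSub_Cfil_le Δ (r := Submodule.comap (LinearMap.rTensor H (μ.flip b)) _)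
        (fun s hs u hu v hv => ?_) hΔa
      exact tmul_mem_sum_tensSub_Cfil Δ (by omega) (ih (s + 1) (by omega) hu) hv
    · refine sum_tensSub_Cfil_le Δ (r := Submodule.comap (LinearMap.lTensor H (μ.flip b)) _)
        (fun s hs u hu v hv => ?_) hΔa
      exact tmul_mem_sum_tensSub_Cfil Δ (by omega) hu (ih (i - s) (by omega) hv)

lemma Phi_mem_Cfil (hdlaw : DistribLaw μ Δ) {n : ℕ} {x : H} (hx : x ∈ Cfil K H Δ n) :
    Phi μ Δ x ∈ Cfil K H Δ n := by
  rcases n with _ | n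
  · rw [Cfil_zero, Submodule.mem_bot] at hx ⊢
    rw [hx, map_zero]
  refine sum_tensSub_Cfil_le Δ (r := (Cfil K H Δ (n + 1)).comap (lift μ))
    (fun j hj u hu v hv => ?_) ((mem_Cfil_succ Δ).mp hx)
  simpa [show j + 1 + (n - j) = n + 1 by omega] using mul_mem_Cfil hdlaw hu hv

lemma leftSplit_mem_tensSub_Cfil (g : H ⊗[K] H →ₗ[K] H) {n : ℕ} {T : H ⊗[K] H}
    (hT : T ∈ tensSub K H (Cfil K H Δ (n + 1)) ⊤) :
    leftSplit Δ g T ∈ tensSub K H (Cfil K H Δ n) ⊤ := by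
  refine (tensSub_le_iff (r := (tensSub K H (Cfil K H Δ n) ⊤).comap (leftSplit Δ g))).mpr
    (fun a ha b _ => ?_) hT
  rw [Submodule.mem_comap, leftSplit_tmul]
  exact tensSub_top_le_comap_lTensor _ _ (Delta_mem_tensSub_of_mem_Cfil_succ Δ ha)

end DistributiveLaw

section Annihilators

variable {K : Type} [Field K] [CharZero K] {H : Type} [AddCommGroup H] [Module K H]
  {μ : H →ₗ[K] H →ₗ[K] H} {Δ : H →ₗ[K] H ⊗[K] H}

lemma exists_annihilator_Psi_of_lt (hdlaw : DistribLaw μ Δ) (g : H ⊗[K] H →ₗ[K] H) {n : ℕ}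
    (hΦ : ∀ i < n, ∃ Q ∈ nonposIntRootFree K,
      ∀ x ∈ Cfil K H Δ (i + 1), aeval (Phi μ Δ) (X * Q) x = 0) :
    ∃ R ∈ nonposIntRootFree K,
      ∀ T ∈ tensSub K H (Cfil K H Δ n) ⊤, aeval (Psi μ Δ g) R T = 0 := by
  refine exists_aeval_eq_zero_of_triangular _ (tensSub_Cfil_top_mono Δ)
    (by rw [Cfil_zero, tensSub_bot_left])
    (fun _ => tensSub_top_le_comap_rTensor fun _ hx => add_mem hx (Phi_mem_Cfil hdlaw hx))
    (fun _ _ hT => leftSplit_mem_tensSub_Cfil g hT) fun i hi => ?_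
  obtain ⟨Q, hQ, hQx⟩ := hΦ i hi
  refine ⟨(X * Q).comp (X - 1), X_mul_comp_X_sub_one_mem_nonposIntRootFree hQ, fun T hT => ?_⟩
  have hshift : aeval ((1 + Phi μ Δ).rTensor H) ((X * Q).comp (X - 1))
      = (aeval (Phi μ Δ) (X * Q)).rTensor H := by
    have hrT : ∀ f : Module.End K H, f.rTensor H = Module.End.rTensorAlgHom K H H f :=
      fun _ => rfl
    rw [hrT, hrT, aeval_algHom_apply, aeval_comp]
    simp
  rw [hshift, ← Submodule.mem_bot K, ← tensSub_bot_left ⊤]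
  exact tensSub_top_le_comap_rTensor (fun x hx => (Submodule.mem_bot K).mpr (hQx x hx)) hT

lemma exists_annihilator_Phi (hdlaw : DistribLaw μ Δ)
    (hnap : tau23 K H ∘ₗ LinearMap.rTensor H Δ ∘ₗ Δ = LinearMap.rTensor H Δ ∘ₗ Δ) (n : ℕ) :
    ∃ Q ∈ nonposIntRootFree K, ∀ x ∈ Cfil K H Δ n, aeval (Phi μ Δ) (X * Q) x = 0 := by
  induction n using Nat.strong_induction_on with
  | _ n ih =>
    rcases n with _ | n
    · refine ⟨1, one_mem _, fun x hx => ?_⟩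
      rw [Cfil_zero, Submodule.mem_bot] at hx
      rw [hx, map_zero]
    obtain ⟨R, hR, hRT⟩ := exists_annihilator_Psi_of_lt hdlaw (lift μ) (n := n)
      fun i hi => ih (i + 1) (by omega)
    refine ⟨R, hR, fun x hx => ?_⟩
    have hΔ : Δ (aeval (Phi μ Δ) R x) = 0 := by
      rw [← LinearMap.comp_apply, comp_aeval_of_comp_eq (Delta_comp_Phi hdlaw hnap),
        LinearMap.comp_apply]
      exact hRT _ (Delta_mem_tensSub_of_mem_Cfil_succ Δ hx)
    rw [map_mul, Module.End.mul_apply, aeval_X, Phi_apply, hΔ, map_zero]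

lemma exists_annihilator_Psi (hdlaw : DistribLaw μ Δ)
    (hnap : tau23 K H ∘ₗ LinearMap.rTensor H Δ ∘ₗ Δ = LinearMap.rTensor H Δ ∘ₗ Δ)
    (g : H ⊗[K] H →ₗ[K] H) (n : ℕ) :
    ∃ R ∈ nonposIntRootFree K,
      ∀ T ∈ tensSub K H (Cfil K H Δ n) ⊤, aeval (Psi μ Δ g) R T = 0 :=
  exists_annihilator_Psi_of_lt hdlaw g fun i _ => exists_annihilator_Phi hdlaw hnap (i + 1)

end Annihilators

section Decomposition

variable {K : Type} [Field K] [CharZero K] {H : Type} [AddCommGroup H] [Module K H]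
  {μ : H →ₗ[K] H →ₗ[K] H} {Δ : H →ₗ[K] H ⊗[K] H}
  (hdlaw : DistribLaw μ Δ)
  (hnap : tau23 K H ∘ₗ LinearMap.rTensor H Δ ∘ₗ Δ = LinearMap.rTensor H Δ ∘ₗ Δ)
  (hconn : ∀ x : H, ∃ n, x ∈ Cfil K H Δ n)
include hdlaw hnap hconn

lemma Delta_eq_zero_of_Phi_eq_zero {x : H} (hx : Phi μ Δ x = 0) : Δ x = 0 := by
  obtain ⟨n, hn⟩ := hconn x
  obtain ⟨R, hR, hRT⟩ := exists_annihilator_Psi hdlaw hnap (lift μ) n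
  have hΨ : Psi μ Δ (lift μ) (Δ x) = 0 := by
    rw [← LinearMap.comp_apply, ← Delta_comp_Phi hdlaw hnap, LinearMap.comp_apply, hx, map_zero]
  have h := hRT (Δ x) (Delta_mem_tensSub_of_mem_Cfil_succ Δ (Cfil_le_succ Δ n hn))
  rw [aeval_apply_of_apply_eq_zero hΨ] at h
  exact (smul_eq_zero.mp h).resolve_left (coeff_zero_ne_zero_of_mem_nonposIntRootFree hR)

lemma codisjoint_ker_range_lift :
    Codisjoint (LinearMap.ker Δ) (LinearMap.range (lift μ)) := by
  rw [codisjoint_iff, eq_top_iff]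
  intro x _
  obtain ⟨n, hn⟩ := hconn x
  obtain ⟨Q, hQ, hQx⟩ := exists_annihilator_Phi hdlaw hnap n
  have hker : aeval (Phi μ Δ) Q x ∈ LinearMap.ker Δ := by
    refine Delta_eq_zero_of_Phi_eq_zero hdlaw hnap hconn ?_
    simpa [Module.End.mul_apply] using hQx x hn
  have hx : x = (Q.coeff 0)⁻¹ • (aeval (Phi μ Δ) Q x - lift μ (Δ (aeval (Phi μ Δ) Q.divX x))) := by
    rw [aeval_apply_eq_apply_add_coeff_zero_smul, Phi_apply, add_sub_cancel_left, smul_smul,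
      inv_mul_cancel₀ (coeff_zero_ne_zero_of_mem_nonposIntRootFree hQ), one_smul]
  rw [hx]
  exact Submodule.smul_mem _ _ (Submodule.sub_mem _ (Submodule.mem_sup_left hker)
    (Submodule.mem_sup_right (LinearMap.mem_range_self _ _)))

lemma disjoint_ker_range_lift
    (hpre : ∀ a b c : H, μ (μ a b) c - μ a (μ b c) = μ (μ a c) b - μ a (μ c b)) :
    Disjoint (LinearMap.ker Δ) (LinearMap.range (lift μ)) := by
  rw [Submodule.disjoint_def]
  rintro x hxΔ ⟨T, rfl⟩
  obtain ⟨m, hm⟩ := exists_mem_tensSub_Cfil Δ hconn T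
  obtain ⟨R, hR, hRT⟩ := exists_annihilator_Psi hdlaw hnap (lift μ.flip) m
  obtain ⟨T', rfl⟩ := mem_range_of_aeval_apply_eq_zero
    (coeff_zero_ne_zero_of_mem_nonposIntRootFree hR) (hRT T hm)
  rw [← LinearMap.comp_apply, ← Phi_comp_lift hpre hdlaw, LinearMap.comp_apply] at hxΔ ⊢
  obtain ⟨n, hn⟩ := hconn (lift μ T')
  obtain ⟨Q, hQ, hQw⟩ := exists_annihilator_Phi hdlaw hnap n
  have hΦ : Phi μ Δ (Phi μ Δ (lift μ T')) = 0 := by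
    rw [Phi_apply (Phi μ Δ _), LinearMap.mem_ker.mp hxΔ, map_zero]
  have h := hQw _ hn
  rw [mul_comm, map_mul, Module.End.mul_apply, aeval_X, aeval_apply_of_apply_eq_zero hΦ] at h
  exact (smul_eq_zero.mp h).resolve_left (coeff_zero_ne_zero_of_mem_nonposIntRootFree hQ)

end Decomposition

variable (μ : H →ₗ[K] H →ₗ[K] H) (Δ : H →ₗ[K] TensorProduct K H H)

/-- Let `H` be a pre-Lie algebra (char 0) with a nonassociative
permutative connected coproduct satisfying the distributive law
`Δ(a∘b) = a⊗b + Δ(a)∘b` (derivation action of `H` on `H⊗H`).  Then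
`H = Prim(H) ⊕ H²`, where `Prim(H) = ker Δ` and `H²` is the image of the
pre-Lie product. -/
theorem prim_compl_square
    (hpre : ∀ a b c : H,
      μ (μ a b) c - μ a (μ b c) = μ (μ a c) b - μ a (μ c b))
    (hnap : tau23 K H ∘ₗ LinearMap.rTensor H Δ ∘ₗ Δ = LinearMap.rTensor H Δ ∘ₗ Δ)
    (hdlaw : ∀ x y : H,
      Δ (μ x y) = x ⊗ₜ[K] y + LinearMap.rTensor H (μ.flip y) (Δ x)
        + LinearMap.lTensor H (μ.flip y) (Δ x))
    (hconn : ∀ x : H, ∃ n, x ∈ Cfil K H Δ n) :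
    IsCompl (LinearMap.ker Δ) (LinearMap.range (TensorProduct.lift μ)) :=
  ⟨disjoint_ker_range_lift hdlaw hnap hconn hpre, codisjoint_ker_range_lift hdlaw hnap hconn⟩
end

section
/- Let H be a pre-Lie algebra with a nonassociative permutative connected coproduct satisfying Δ(a∘b) = a⊗b + Δ(a)∘b. Then H is generated as a pre-Lie algebra by its primitive elements Prim(H) = ker Δ. -/
open TensorProduct

variable (K : Type) [Field K] [CharZero K]
variable (H : Type) [AddCommGroup H] [Module K H]

variable (μ : H →ₗ[K] H →ₗ[K] H) (Δ : H →ₗ[K] TensorProduct K H H)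

/-!
Fix a subspace `S` closed under `∘` and containing `ker Δ`, write `m̂ : H ⊗ H → H` for the
product, and filter `H` by `G₀ = 0`, `G_{m+1} = Δ⁻¹((G_m ∩ S) ⊗ S)`. The distributive law,
together with the NAP identity (which makes the `τ₂₃` in it disappear on `(Δ ⊗ id)Δx`), gives
`Δ(m̂Δx) = Δx + (m̂Δ ⊗ id)Δx + (id ⊗ m̂)(Δ ⊗ id)Δx`, and from this one shows by induction that
`m̂Δx - m x ∈ G_m` for `x ∈ G_{m+1}`. As `m̂Δx ∈ S` and `m` is invertible in characteristic
zero (for `m = 0`, `G₁ = ker Δ`), every `G_m` lies in `S`. Finally `C_n ⊆ G_n` by induction on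
`n`, and connectedness gives `H = ⋃ C_n ⊆ S`.
-/

namespace NAPCoproduct

open LinearMap Submodule

section Filtrations

variable {K : Type} [Field K] {M : Type} [AddCommGroup M] [Module K M]

theorem tensSub_eq_map₂ (p q : Submodule K M) :
    tensSub K M p q = map₂ (TensorProduct.mk K M M) p q :=
  TensorProduct.range_mapIncl p q

theorem tmul_mem_tensSub {p q : Submodule K M} {a b : M} (ha : a ∈ p) (hb : b ∈ q) :
    a ⊗ₜ[K] b ∈ tensSub K M p q := by
  rw [tensSub_eq_map₂]
  exact apply_mem_map₂ _ ha hb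

theorem tensSub_mono {p p' q q' : Submodule K M} (hp : p ≤ p') (hq : q ≤ q') :
    tensSub K M p q ≤ tensSub K M p' q' := by
  simpa only [tensSub_eq_map₂] using map₂_le_map₂ hp hq

theorem tensSub_bot_left (q : Submodule K M) : tensSub K M ⊥ q = ⊥ := by
  rw [tensSub_eq_map₂, map₂_bot_left]

theorem map_mem_tensSub {p q p' q' : Submodule K M} {f g : M →ₗ[K] M}
    (hf : p ≤ p'.comap f) (hg : q ≤ q'.comap g) {w : M ⊗[K] M} (hw : w ∈ tensSub K M p q) :
    TensorProduct.map f g w ∈ tensSub K M p' q' := by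
  rw [tensSub_eq_map₂] at hw
  exact (map₂_le (r := (tensSub K M p' q').comap (TensorProduct.map f g))).mpr
    (fun _ ha _ hb => tmul_mem_tensSub (p := p') (q := q') (hf ha) (hg hb)) hw

theorem lift_mem_of_mem_tensSub {μ : M →ₗ[K] M →ₗ[K] M} {S : Submodule K M}
    (hS : ∀ a b : M, a ∈ S → b ∈ S → μ a b ∈ S) {w : M ⊗[K] M} (hw : w ∈ tensSub K M S S) :
    lift μ w ∈ S := by
  rw [tensSub_eq_map₂] at hw
  exact (map₂_le (r := S.comap (lift μ))).mpr (fun a ha b hb => hS a b ha hb) hw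

theorem Cfil_zero (D : M →ₗ[K] M ⊗[K] M) : Cfil K M D 0 = ⊥ := by
  rw [Cfil]

theorem Cfil_succ (D : M →ₗ[K] M ⊗[K] M) (n : ℕ) :
    Cfil K M D (n + 1) =
      comap D (∑ j ∈ Finset.range n, tensSub K M (Cfil K M D (j + 1)) (Cfil K M D (n - j))) := by
  rw [Cfil, Finset.sum_attach (Finset.range n)
    (fun j => tensSub K M (Cfil K M D (j + 1)) (Cfil K M D (n - j)))]

noncomputable def depthFil (D : M →ₗ[K] M ⊗[K] M) (S : Submodule K M) : ℕ → Submodule K M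
  | 0 => ⊥
  | m + 1 => comap D (tensSub K M (depthFil D S m ⊓ S) S)

variable {D : M →ₗ[K] M ⊗[K] M} {S : Submodule K M}

theorem depthFil_mono : Monotone (depthFil D S) := by
  refine monotone_nat_of_le_succ fun m => ?_
  induction m with
  | zero => exact bot_le
  | succ m ih => exact comap_mono (tensSub_mono (inf_le_inf_right S ih) le_rfl)

theorem Cfil_le_depthFil (hG : ∀ m, depthFil D S m ≤ S) (n : ℕ) :
    Cfil K M D n ≤ depthFil D S n := by
  induction n using Nat.strong_induction_on with
  | _ n ih =>
    rcases n with _ | n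
    · rw [Cfil_zero]; exact bot_le
    rw [Cfil_succ]
    refine comap_mono (Finset.sum_induction _ (· ≤ _) (fun _ _ hp hq => ?_) bot_le fun j hj => ?_)
    · rw [Submodule.add_eq_sup]; exact sup_le hp hq
    have hjn := Finset.mem_range.mp hj
    have hleft : Cfil K M D (j + 1) ≤ depthFil D S (j + 1) := ih (j + 1) (by omega)
    have hright : Cfil K M D (n - j) ≤ depthFil D S (n - j) := ih (n - j) (by omega)
    exact tensSub_mono (le_inf (hleft.trans (depthFil_mono (by omega))) (hleft.trans (hG _)))
      (hright.trans (hG _))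

end Filtrations

section Coproduct

variable {K : Type} [Field K] {H : Type} [AddCommGroup H] [Module K H]
  {μ : H →ₗ[K] H →ₗ[K] H} {Δ : H →ₗ[K] H ⊗[K] H}

theorem rTensor_lift_tau23_tmul (u : H ⊗[K] H) (b : H) :
    rTensor H (lift μ) (tau23 K H (u ⊗ₜ[K] b)) = rTensor H (μ.flip b) u := by
  induction u using TensorProduct.induction_on with
  | zero => simp
  | tmul p q => simp [tau23]
  | add u v hu hv => simp only [add_tmul, map_add, hu, hv]

theorem lTensor_lift_assoc_tmul (u : H ⊗[K] H) (b : H) :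
    lTensor H (lift μ) (TensorProduct.assoc K H H H (u ⊗ₜ[K] b)) = lTensor H (μ.flip b) u := by
  induction u using TensorProduct.induction_on with
  | zero => simp
  | tmul p q => simp
  | add u v hu hv => simp only [add_tmul, map_add, hu, hv]

theorem comul_comp_lift
    (hdlaw : ∀ x y : H,
      Δ (μ x y) = x ⊗ₜ[K] y + rTensor H (μ.flip y) (Δ x) + lTensor H (μ.flip y) (Δ x)) :
    Δ ∘ₗ lift μ = LinearMap.id + rTensor H (lift μ) ∘ₗ tau23 K H ∘ₗ rTensor H Δ
      + lTensor H (lift μ) ∘ₗ (TensorProduct.assoc K H H H).toLinearMap ∘ₗ rTensor H Δ := by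
  refine TensorProduct.ext' fun a b => ?_
  simp only [comp_apply, LinearMap.add_apply, id_apply, rTensor_tmul, LinearEquiv.coe_coe,
    lift.tmul, rTensor_lift_tau23_tmul, lTensor_lift_assoc_tmul, hdlaw]

theorem comul_lift_comul
    (hnap : tau23 K H ∘ₗ rTensor H Δ ∘ₗ Δ = rTensor H Δ ∘ₗ Δ)
    (hdlaw : ∀ x y : H,
      Δ (μ x y) = x ⊗ₜ[K] y + rTensor H (μ.flip y) (Δ x) + lTensor H (μ.flip y) (Δ x))
    (x : H) :
    Δ (lift μ (Δ x)) = Δ x + rTensor H (lift μ ∘ₗ Δ) (Δ x)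
      + lTensor H (lift μ) (TensorProduct.assoc K H H H (rTensor H Δ (Δ x))) := by
  have hsymm : tau23 K H (rTensor H Δ (Δ x)) = rTensor H Δ (Δ x) := congr($hnap x)
  rw [← comp_apply Δ, comul_comp_lift hdlaw]
  simp only [LinearMap.add_apply, id_apply, comp_apply, hsymm, rTensor_comp, LinearEquiv.coe_coe]

variable {S : Submodule K H}

theorem lTensor_lift_assoc_rTensor_mem (hS : ∀ a b : H, a ∈ S → b ∈ S → μ a b ∈ S)
    {p p' : Submodule K H} (hp : p ≤ comap Δ (tensSub K H p' S)) {w : H ⊗[K] H}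
    (hw : w ∈ tensSub K H p S) :
    lTensor H (lift μ) (TensorProduct.assoc K H H H (rTensor H Δ w)) ∈ tensSub K H p' S := by
  rw [tensSub_eq_map₂] at hw
  refine (map₂_le (r := comap (lTensor H (lift μ) ∘ₗ (TensorProduct.assoc K H H H).toLinearMap
    ∘ₗ rTensor H Δ) (tensSub K H p' S))).mpr (fun a ha b hb => ?_) hw
  simp only [mem_comap, comp_apply, TensorProduct.mk_apply, rTensor_tmul, LinearEquiv.coe_coe,
    lTensor_lift_assoc_tmul]
  exact map_mem_tensSub (f := LinearMap.id) (g := μ.flip b) (fun _ hc => hc)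
    (fun c hc => hS c b hc hb) (hp ha)

theorem lift_comul_sub_smul_mem_depthFil (hS : ∀ a b : H, a ∈ S → b ∈ S → μ a b ∈ S)
    (hnap : tau23 K H ∘ₗ rTensor H Δ ∘ₗ Δ = rTensor H Δ ∘ₗ Δ)
    (hdlaw : ∀ x y : H,
      Δ (μ x y) = x ⊗ₜ[K] y + rTensor H (μ.flip y) (Δ x) + lTensor H (μ.flip y) (Δ x))
    (m : ℕ) {x : H} (hx : x ∈ depthFil Δ S (m + 1)) :
    lift μ (Δ x) - (m : K) • x ∈ depthFil Δ S m := by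
  induction m generalizing x with
  | zero =>
    have hx0 : Δ x = 0 := by
      simpa only [depthFil, bot_inf_eq, tensSub_bot_left, mem_comap, mem_bot] using hx
    simp [hx0, depthFil]
  | succ m ih =>
    have hΔx : Δ x ∈ tensSub K H (depthFil Δ S (m + 1) ⊓ S) S := hx
    have hstep : depthFil Δ S (m + 1) ⊓ S ≤
        comap (lift μ ∘ₗ Δ - (m : K) • LinearMap.id) (depthFil Δ S m ⊓ S) := by
      rintro a ⟨haG, haS⟩
      have hΔa : Δ a ∈ tensSub K H (depthFil Δ S m ⊓ S) S := haG
      have hliftS : lift μ (Δ a) ∈ S :=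
        lift_mem_of_mem_tensSub hS (tensSub_mono inf_le_right le_rfl hΔa)
      exact ⟨ih haG, S.sub_mem hliftS (S.smul_mem _ haS)⟩
    have hdecomp : Δ (lift μ (Δ x) - ((m + 1 : ℕ) : K) • x) =
        rTensor H (lift μ ∘ₗ Δ - (m : K) • LinearMap.id) (Δ x)
          + lTensor H (lift μ) (TensorProduct.assoc K H H H (rTensor H Δ (Δ x))) := by
      rw [map_sub, map_smul, comul_lift_comul hnap hdlaw, rTensor_sub, rTensor_smul, rTensor_id]
      push_cast
      simp only [LinearMap.sub_apply, LinearMap.smul_apply, id_apply]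
      module
    show Δ _ ∈ tensSub K H (depthFil Δ S m ⊓ S) S
    rw [hdecomp]
    exact add_mem (map_mem_tensSub hstep le_rfl hΔx)
      (lTensor_lift_assoc_rTensor_mem hS inf_le_left hΔx)

theorem depthFil_le [CharZero K] (hS : ∀ a b : H, a ∈ S → b ∈ S → μ a b ∈ S)
    (hprim : ker Δ ≤ S)
    (hnap : tau23 K H ∘ₗ rTensor H Δ ∘ₗ Δ = rTensor H Δ ∘ₗ Δ)
    (hdlaw : ∀ x y : H,
      Δ (μ x y) = x ⊗ₜ[K] y + rTensor H (μ.flip y) (Δ x) + lTensor H (μ.flip y) (Δ x))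
    (m : ℕ) : depthFil Δ S m ≤ S := by
  induction m with
  | zero => exact bot_le
  | succ m ih =>
    intro x hx
    rcases Nat.eq_zero_or_pos m with rfl | hm
    · apply hprim
      simpa only [depthFil, bot_inf_eq, tensSub_bot_left, mem_comap, mem_bot, mem_ker] using hx
    have hlift : lift μ (Δ x) ∈ S :=
      lift_mem_of_mem_tensSub hS (tensSub_mono inf_le_right le_rfl hx)
    have hsmul : (m : K) • x ∈ S := by
      simpa using S.sub_mem hlift (ih (lift_comul_sub_smul_mem_depthFil hS hnap hdlaw m hx))
    exact (S.smul_mem_iff (Nat.cast_ne_zero.mpr hm.ne')).mp hsmul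

end Coproduct

end NAPCoproduct

theorem generated_by_primitives
    (hnap : tau23 K H ∘ₗ LinearMap.rTensor H Δ ∘ₗ Δ = LinearMap.rTensor H Δ ∘ₗ Δ)
    (hdlaw : ∀ x y : H,
      Δ (μ x y) = x ⊗ₜ[K] y + LinearMap.rTensor H (μ.flip y) (Δ x)
        + LinearMap.lTensor H (μ.flip y) (Δ x))
    (hconn : ∀ x : H, ∃ n, x ∈ Cfil K H Δ n) :
    ∀ S : Submodule K H,
      (∀ a b : H, a ∈ S → b ∈ S → μ a b ∈ S) →
      LinearMap.ker Δ ≤ S → S = ⊤ := by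
  intro S hS hprim
  have hG := NAPCoproduct.depthFil_le hS hprim hnap hdlaw
  refine Submodule.eq_top_iff'.mpr fun x => ?_
  obtain ⟨n, hn⟩ := hconn x
  exact hG n (NAPCoproduct.Cfil_le_depthFil hG n hn)
end
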